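/- arXiv:2409.11646 — 2 statements merged into one kernel-verified Lean document; each statement's English description precedes it below -/
import Mathlib

section
/- Let f_θ be a k-deep ReLU neural network with d_i neurons in hidden layer i for i ∈ {1, …, k}. Then the number of distinct model activation patterns P(x) attained at inputs x ∈ ℝ^{d_0} for which at least one neuron of layer 1 is active is at most H = ( ∏_{i=1}^{k} (2^{d_i} − 1) ) + Σ_{i=2}^{k} ( ∏_{j=1}^{i−1} (2^{d_j} − 1) ). -/
/-- `hiddenOut d A b i x` is the output (post-ReLU) of the `i`-th hidden layer
of the ReLU network with weights `A` and biases `b` on input `x`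
(`hiddenOut 0 x = x`; Lean `A i`, `b i` are the paper `A^{(i+1)}`, `b^{(i+1)}`). -/
noncomputable def hiddenOut (d : ℕ → ℕ) (A : ∀ i : ℕ, Matrix (Fin (d (i + 1))) (Fin (d i)) ℝ)
    (b : ∀ i : ℕ, Fin (d (i + 1)) → ℝ) : (i : ℕ) → (Fin (d 0) → ℝ) → Fin (d i) → ℝ
  | 0, x => x
  | i + 1, x => fun j => max ((∑ v, A i j v * hiddenOut d A b i x v) + b i j) 0

/-- `preactv d A b i x j` is the preactivation of the `j`-th neuron of paper layer `i+1`
at input `x`; in particular `preactv d A b k x` is the raw output `f_θ(x)` of the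
`k`-deep network (no ReLU on the output layer). -/
noncomputable def preactv (d : ℕ → ℕ) (A : ∀ i : ℕ, Matrix (Fin (d (i + 1))) (Fin (d i)) ℝ)
    (b : ∀ i : ℕ, Fin (d (i + 1)) → ℝ) (i : ℕ) (x : Fin (d 0) → ℝ) (j : Fin (d (i + 1))) : ℝ :=
  (∑ v, A i j v * hiddenOut d A b i x v) + b i j

lemma hiddenOut_congr (d : ℕ → ℕ) (A : ∀ i : ℕ, Matrix (Fin (d (i + 1))) (Fin (d i)) ℝ)
    (b : ∀ i : ℕ, Fin (d (i + 1)) → ℝ) {m : ℕ} {x y : Fin (d 0) → ℝ}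
    (h : hiddenOut d A b m x = hiddenOut d A b m y) :
    ∀ i, m ≤ i → hiddenOut d A b i x = hiddenOut d A b i y := by
  intro i hi
  induction i, hi using Nat.le_induction with
  | base => exact h
  | succ n hn ih => funext j; simp [hiddenOut, ih]

lemma preactv_congr (d : ℕ → ℕ) (A : ∀ i : ℕ, Matrix (Fin (d (i + 1))) (Fin (d i)) ℝ)
    (b : ∀ i : ℕ, Fin (d (i + 1)) → ℝ) {m : ℕ} {x y : Fin (d 0) → ℝ}
    (h : hiddenOut d A b m x = hiddenOut d A b m y) {i : ℕ} (hi : m ≤ i) :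
    preactv d A b i x = preactv d A b i y := by
  unfold preactv
  rw [hiddenOut_congr d A b h i hi]

lemma hiddenOut_succ_eq_zero (d : ℕ → ℕ) (A : ∀ i : ℕ, Matrix (Fin (d (i + 1))) (Fin (d i)) ℝ)
    (b : ∀ i : ℕ, Fin (d (i + 1)) → ℝ) {m : ℕ} {x : Fin (d 0) → ℝ}
    (h : ∀ j, ¬ (0 < preactv d A b m x j)) :
    hiddenOut d A b (m + 1) x = fun _ => 0 := by
  funext j
  show max ((∑ v, A m j v * hiddenOut d A b m x v) + b m j) 0 = 0
  have := h j
  unfold preactv at this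
  exact max_eq_right (le_of_not_gt this)

/-- cardinality of a pi set. -/
lemma ncard_univ_pi {ι : Type*} [Fintype ι] {α : ι → Type*} [∀ i, Finite (α i)]
    (t : ∀ i, Set (α i)) : (Set.univ.pi t).ncard = ∏ i, (t i).ncard := by
  have e : ↥(Set.univ.pi t) ≃ ∀ i, ↥(t i) :=
    { toFun := fun q i => ⟨q.1 i, q.2 i (Set.mem_univ i)⟩
      invFun := fun p => ⟨fun i => (p i).1, fun i _ => (p i).2⟩
      left_inv := fun q => rfl
      right_inv := fun p => rfl }
  rw [← Nat.card_coe_set_eq, Nat.card_congr e, Nat.card_pi]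
  simp [Nat.card_coe_set_eq]

lemma ncard_ne_const_false (n : ℕ) :
    ({p : Fin n → Bool | p ≠ fun _ => false}).ncard = 2 ^ n - 1 := by
  have h1 : ({p : Fin n → Bool | p ≠ fun _ => false})
      = ({fun _ => false} : Set (Fin n → Bool))ᶜ := by
    ext p; simp [Set.mem_compl_iff]
  have h2 := Set.ncard_add_ncard_compl ({fun _ => false} : Set (Fin n → Bool))
  rw [Set.ncard_singleton] at h2
  have h3 : Nat.card (Fin n → Bool) = 2 ^ n := by
    simp [Nat.card_eq_fintype_card]
  rw [h1]
  omega

lemma ncard_finset_biUnion_le {α : Type*} [Finite α] (s : Finset ℕ) (t : ℕ → Set α) :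
    (⋃ i ∈ s, t i).ncard ≤ ∑ i ∈ s, (t i).ncard := by
  classical
  induction s using Finset.induction with
  | empty => simp
  | insert _ _ hns ih =>
    rename_i a s
    rw [Finset.set_biUnion_insert, Finset.sum_insert hns]
    exact le_trans (Set.ncard_union_le _ _) (Nat.add_le_add_left ih _)

lemma prod_fin_eq_prod_Icc (d : ℕ → ℕ) (m : ℕ) :
    (∏ i : Fin m, (2 ^ d (i.val + 1) - 1)) = ∏ j ∈ Finset.Icc 1 m, (2 ^ d j - 1) := by
  rw [Fin.prod_univ_eq_prod_range (fun i => 2 ^ d (i + 1) - 1) m, ← Finset.Ico_add_one_right_eq_Icc,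
    Finset.prod_Ico_eq_prod_range]
  simp [Nat.add_comm]

/-- the number of distinct model activation patterns attained at inputs
for which at least one neuron of layer 1 is active is at most
`H = ∏_{i=1}^k (2^{d_i} − 1) + Σ_{i=2}^k ∏_{j=1}^{i−1} (2^{d_j} − 1)`.
A pattern is the family of Booleans recording, for each hidden layer `i+1` (Lean `i : Fin k`)
and each neuron `j`, whether the preactivation is strictly positive. -/
theorem number_of_model_activation_patterns_le
    (k : ℕ) (hk : 1 ≤ k) (d : ℕ → ℕ)
    (A : ∀ i : ℕ, Matrix (Fin (d (i + 1))) (Fin (d i)) ℝ)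
    (b : ∀ i : ℕ, Fin (d (i + 1)) → ℝ) :
    Set.ncard {q : ∀ i : Fin k, Fin (d (i.val + 1)) → Bool |
        ∃ x : Fin (d 0) → ℝ,
          (∃ j : Fin (d 1), 0 < preactv d A b 0 x j) ∧
          q = fun (i : Fin k) (jj : Fin (d (i.val + 1))) => decide (0 < preactv d A b i.val x jj)}
      ≤ (∏ i ∈ Finset.Icc 1 k, (2 ^ d i - 1)) +
          ∑ i ∈ Finset.Icc 2 k, ∏ j ∈ Finset.Icc 1 (i - 1), (2 ^ d j - 1) := by
  classical
  set P := ∀ i : Fin k, Fin (d (i.val + 1)) → Bool with hP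
  set pat : (Fin (d 0) → ℝ) → P :=
    fun x => fun (i : Fin k) (jj : Fin (d (i.val + 1))) => decide (0 < preactv d A b i.val x jj)
    with hpat
  set S : Set P := {q | ∃ x : Fin (d 0) → ℝ,
      (∃ j : Fin (d 1), 0 < preactv d A b 0 x j) ∧ q = pat x} with hS
  -- key: two attained patterns with the same all-false layer `m` agree from `m` onwards
  have key : ∀ (x y : Fin (d 0) → ℝ) (m : Fin k),
      pat x m = (fun _ => false) → pat y m = (fun _ => false) →
      ∀ i : Fin k, m.val ≤ i.val → pat x i = pat y i := by
    intro x y m hx hy i hi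
    have hx' : ∀ j, ¬ (0 < preactv d A b m.val x j) := by
      intro j hj
      have := congrFun hx j
      simp only [hpat, decide_eq_true hj] at this
      exact Bool.true_eq_false.mp this
    have hy' : ∀ j, ¬ (0 < preactv d A b m.val y j) := by
      intro j hj
      have := congrFun hy j
      simp only [hpat, decide_eq_true hj] at this
      exact Bool.true_eq_false.mp this
    rcases eq_or_lt_of_le hi with heq | hlt
    · have : m = i := Fin.ext heq
      rw [← this, hx, hy]
    · have hho : hiddenOut d A b (m.val + 1) x = hiddenOut d A b (m.val + 1) y := by
        rw [hiddenOut_succ_eq_zero d A b hx', hiddenOut_succ_eq_zero d A b hy']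
      have hpre : preactv d A b i.val x = preactv d A b i.val y :=
        preactv_congr d A b hho hlt
      funext jj
      simp only [hpat, hpre]
  -- covering sets
  set T0 : Set P := Set.univ.pi (fun i => {p | p ≠ fun _ => false}) with hT0
  set T : ℕ → Set P := fun m => {q | q ∈ S ∧ ∃ hm : m < k,
      q ⟨m, hm⟩ = (fun _ => false) ∧ ∀ i : Fin k, i.val < m → q i ≠ fun _ => false} with hT
  have cover : S ⊆ T0 ∪ ⋃ m ∈ Finset.Ico 1 k, T m := by
    intro q hq
    obtain ⟨x, ⟨j0, hj0⟩, hqx⟩ := hq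
    by_cases hall : ∀ i : Fin k, q i ≠ fun _ => false
    · left
      intro i _
      exact hall i
    · right
      push_neg at hall
      obtain ⟨i0, hi0⟩ := hall
      have hne : (Finset.univ.filter (fun i : Fin k => q i = fun _ => false)).Nonempty :=
        ⟨i0, by simp [hi0]⟩
      set m := (Finset.univ.filter (fun i : Fin k => q i = fun _ => false)).min' hne with hm
      have hmem : q m = fun _ => false := by
        have := Finset.min'_mem _ hne
        simpa using this
      have hmin : ∀ i : Fin k, i.val < m.val → q i ≠ fun _ => false := by
        intro i hilt hcon
        have : m ≤ i := Finset.min'_le _ i (by simp [hcon])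
        exact absurd (lt_of_lt_of_le hilt this) (lt_irrefl _)
      have hq0 : q ⟨0, hk⟩ ≠ fun _ => false := by
        intro hcon
        have := congrFun hcon j0
        rw [hqx] at this
        simp only [hpat, decide_eq_true hj0] at this
        exact Bool.true_eq_false.mp this
      have hm1 : 1 ≤ m.val := by
        rcases Nat.eq_zero_or_pos m.val with h0 | h1
        · exact absurd (by rw [show (⟨0, hk⟩ : Fin k) = m from (Fin.ext h0.symm)]; exact hmem) hq0
        · exact h1
      refine Set.mem_biUnion (Finset.mem_Ico.mpr ⟨hm1, m.isLt⟩) ?_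
      refine ⟨⟨x, ⟨j0, hj0⟩, hqx⟩, m.isLt, ?_, hmin⟩
      convert hmem using 2
  -- bound for T0
  have hb0 : T0.ncard ≤ ∏ i ∈ Finset.Icc 1 k, (2 ^ d i - 1) := by
    rw [hT0, ncard_univ_pi, ← prod_fin_eq_prod_Icc d k]
    exact le_of_eq (Finset.prod_congr rfl (fun i _ => ncard_ne_const_false _))
  -- bound for T m
  have hbm : ∀ m ∈ Finset.Ico 1 k, (T m).ncard ≤ ∏ j ∈ Finset.Icc 1 m, (2 ^ d j - 1) := by
    intro m hm
    obtain ⟨hm1, hmk⟩ := Finset.mem_Ico.mp hm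
    set r : P → (∀ i : Fin m, Fin (d (i.val + 1)) → Bool) :=
      fun q i => q ⟨i.val, lt_trans i.isLt hmk⟩ with hr
    have hinj : Set.InjOn r (T m) := by
      rintro q hqT q' hq'T hrq
      obtain ⟨⟨x, hx1, hqx⟩, hmk', hqm, _⟩ := hqT
      obtain ⟨⟨y, hy1, hqy⟩, _, hq'm, _⟩ := hq'T
      funext i
      rcases lt_or_ge i.val m with hilt | hige
      · have h := congrFun hrq ⟨i.val, hilt⟩
        simp only [hr] at h
        exact h
      · rw [hqx, hqy]
        refine key x y ⟨m, hmk⟩ ?_ ?_ i hige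
        · rw [← hqx]; exact hqm
        · rw [← hqy]; exact hq'm
    calc (T m).ncard = (r '' T m).ncard := (Set.ncard_image_of_injOn hinj).symm
      _ ≤ (Set.univ.pi
            (fun i : Fin m => {p : Fin (d (i.val + 1)) → Bool | p ≠ fun _ => false})).ncard := by
          refine Set.ncard_le_ncard ?_ (Set.toFinite _)
          rintro _ ⟨q, hqT, rfl⟩
          intro i _
          obtain ⟨_, hmk', _, hmin⟩ := hqT
          exact hmin ⟨i.val, lt_trans i.isLt hmk⟩ i.isLt
      _ = ∏ j ∈ Finset.Icc 1 m, (2 ^ d j - 1) := by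
          rw [ncard_univ_pi, ← prod_fin_eq_prod_Icc d m]
          exact Finset.prod_congr rfl (fun i _ => ncard_ne_const_false _)
  -- assemble
  have hsum : ∑ m ∈ Finset.Ico 1 k, ∏ j ∈ Finset.Icc 1 m, (2 ^ d j - 1)
      = ∑ i ∈ Finset.Icc 2 k, ∏ j ∈ Finset.Icc 1 (i - 1), (2 ^ d j - 1) := by
    rw [show Finset.Icc 2 k = Finset.Ico 2 (k + 1) from (Finset.Ico_add_one_right_eq_Icc 2 k).symm,
      Finset.sum_Ico_eq_sum_range, Finset.sum_Ico_eq_sum_range]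
    simp only [show k + 1 - 2 = k - 1 from rfl]
    apply Finset.sum_congr rfl
    intro i _
    rw [show 2 + i - 1 = 1 + i from by omega]
  calc S.ncard ≤ (T0 ∪ ⋃ m ∈ Finset.Ico 1 k, T m).ncard := Set.ncard_le_ncard cover
    _ ≤ T0.ncard + (⋃ m ∈ Finset.Ico 1 k, T m).ncard := Set.ncard_union_le _ _
    _ ≤ T0.ncard + ∑ m ∈ Finset.Ico 1 k, (T m).ncard :=
        Nat.add_le_add_left (ncard_finset_biUnion_le _ _) _
    _ ≤ (∏ i ∈ Finset.Icc 1 k, (2 ^ d i - 1))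
          + ∑ m ∈ Finset.Ico 1 k, ∏ j ∈ Finset.Icc 1 m, (2 ^ d j - 1) :=
        Nat.add_le_add hb0 (Finset.sum_le_sum hbm)
    _ = _ := by rw [hsum]
end

section
/- Let f_θ be a k-deep ReLU neural network and assume D_j^{(i)} ≠ 0 for every i ∈ {1, …, k+1} and every j ∈ {1, …, d_i}. Define diagonal matrices D^{(0)} = I_{d_0} and D^{(i)} = diag(D_1^{(i)}, …, D_{d_i}^{(i)}) for 1 ≤ i ≤ k+1, and define the extracted parameters Â^{(i)} = (D^{(i)})^{-1} A^{(i)} D^{(i-1)} and b̂^{(i)} = (D^{(i)})^{-1} b^{(i)} for i ∈ {1, …, k+1}. Then the k-deep ReLU neural network f_θ̂ with parameters (Â^{(i)}, b̂^{(i)}) satisfies f_θ̂(x) = f_θ(x) / |Σ_{v=1}^{d_k} w_{1,v}^{(k+1)} C_{v,1}^{(k)}| for all x ∈ ℝ^{d_0}; that is, f_θ̂ is a functionally equivalent model of f_θ with constant c = 1 / D_1^{(k+1)} > 0. -/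
/-- The all-active composition `C^{(q)} = A^{(q)} ⋯ A^{(1)}` (with `C^{(0)} = I`). -/
noncomputable def Cmat (d : ℕ → ℕ) (A : ∀ i : ℕ, Matrix (Fin (d (i + 1))) (Fin (d i)) ℝ) :
    (q : ℕ) → Matrix (Fin (d q)) (Fin (d 0)) ℝ
  | 0 => 1
  | q + 1 => A q * Cmat d A q

/-- `Dcoef d A u0 i j = D_j^{(i)} = |Σ_v w_{j,v}^{(i)} C_{v,1}^{(i-1)}|`
(with `u0` the index of the first column), and `D^{(0)} = 1`. -/
noncomputable def Dcoef (d : ℕ → ℕ) (A : ∀ i : ℕ, Matrix (Fin (d (i + 1))) (Fin (d i)) ℝ)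
    (u0 : Fin (d 0)) : (i : ℕ) → Fin (d i) → ℝ
  | 0 => fun _ => 1
  | i + 1 => fun j => |∑ v, A i j v * Cmat d A i v u0|

lemma Dcoef_pos {d : ℕ → ℕ} {A : ∀ i : ℕ, Matrix (Fin (d (i + 1))) (Fin (d i)) ℝ}
    {u0 : Fin (d 0)} {k : ℕ}
    (hD : ∀ i : ℕ, i ≤ k → ∀ j : Fin (d (i + 1)), Dcoef d A u0 (i + 1) j ≠ 0) :
    ∀ i : ℕ, i ≤ k + 1 → ∀ v : Fin (d i), 0 < Dcoef d A u0 i v := by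
  intro i hi v
  cases i with
  | zero => simp [Dcoef]
  | succ n =>
    have h1 := hD n (by omega) v
    have h2 : 0 ≤ Dcoef d A u0 (n + 1) v := by
      show (0:ℝ) ≤ |_|; exact abs_nonneg _
    exact lt_of_le_of_ne h2 (Ne.symm h1)

lemma hidden_rescaled {d : ℕ → ℕ} {A : ∀ i : ℕ, Matrix (Fin (d (i + 1))) (Fin (d i)) ℝ}
    {b : ∀ i : ℕ, Fin (d (i + 1)) → ℝ} {u0 : Fin (d 0)} {k : ℕ}
    (hD : ∀ i : ℕ, i ≤ k → ∀ j : Fin (d (i + 1)), Dcoef d A u0 (i + 1) j ≠ 0) :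
    ∀ i : ℕ, i ≤ k → ∀ (x : Fin (d 0) → ℝ) (v : Fin (d i)),
      hiddenOut d
        (fun i => Matrix.of fun jj v => A i jj v * Dcoef d A u0 i v / Dcoef d A u0 (i + 1) jj)
        (fun i jj => b i jj / Dcoef d A u0 (i + 1) jj) i x v
      = hiddenOut d A b i x v / Dcoef d A u0 i v := by
  intro i
  induction i with
  | zero => intro _ x v; simp [hiddenOut, Dcoef]
  | succ n ih =>
    intro hn x v
    have hpos := Dcoef_pos hD
    have hv : 0 < Dcoef d A u0 (n + 1) v := hpos (n + 1) (by omega) v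
    show max _ 0 = max _ 0 / _
    have hsum : (∑ u, (Matrix.of fun jj u => A n jj u * Dcoef d A u0 n u / Dcoef d A u0 (n + 1) jj) v u *
          hiddenOut d
            (fun i => Matrix.of fun jj v => A i jj v * Dcoef d A u0 i v / Dcoef d A u0 (i + 1) jj)
            (fun i jj => b i jj / Dcoef d A u0 (i + 1) jj) n x u)
        + b n v / Dcoef d A u0 (n + 1) v
        = ((∑ u, A n v u * hiddenOut d A b n x u) + b n v) / Dcoef d A u0 (n + 1) v := by
      rw [add_div, Finset.sum_div]
      congr 1
      refine Finset.sum_congr rfl fun u _ => ?_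
      rw [ih (by omega) x u]
      have hu : Dcoef d A u0 n u ≠ 0 := (hpos n (by omega) u).ne'
      simp only [Matrix.of_apply]
      field_simp
    rw [hsum, ← max_div_div_right hv.le, zero_div]

/-- assuming `D_j^{(i)} ≠ 0` for every layer `i ∈ {1,…,k+1}` and neuron `j`,
the extracted network with weights `Â^{(i)} = (D^{(i)})⁻¹ A^{(i)} D^{(i-1)}` (entrywise
`Â^{(i)}_{j,v} = A^{(i)}_{j,v} D_v^{(i-1)} / D_j^{(i)}`) and biases
`b̂^{(i)} = (D^{(i)})⁻¹ b^{(i)}` satisfies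
`f_θ̂(x) = f_θ(x) / |Σ_v w_{1,v}^{(k+1)} C_{v,1}^{(k)}| = f_θ(x) / D_1^{(k+1)}`
for all inputs `x`, i.e. it is a functionally equivalent model with constant
`c = 1 / D_1^{(k+1)} > 0`. -/
theorem rescaled_extracted_network_functionally_equivalent
    (k : ℕ) (d : ℕ → ℕ) (h0 : 0 < d 0) (hd : d (k + 1) = 1)
    (A : ∀ i : ℕ, Matrix (Fin (d (i + 1))) (Fin (d i)) ℝ)
    (b : ∀ i : ℕ, Fin (d (i + 1)) → ℝ)
    (hD : ∀ i : ℕ, i ≤ k → ∀ j : Fin (d (i + 1)), Dcoef d A ⟨0, h0⟩ (i + 1) j ≠ 0) :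
    ∀ (x : Fin (d 0) → ℝ) (j : Fin (d (k + 1))),
      preactv d
        (fun i => Matrix.of fun jj v =>
          A i jj v * Dcoef d A ⟨0, h0⟩ i v / Dcoef d A ⟨0, h0⟩ (i + 1) jj)
        (fun i jj => b i jj / Dcoef d A ⟨0, h0⟩ (i + 1) jj) k x j
      = preactv d A b k x j / Dcoef d A ⟨0, h0⟩ (k + 1) ⟨0, by omega⟩ := by
  intro x j
  have hj : j = ⟨0, by omega⟩ := by
    apply Fin.ext
    have := j.isLt
    omega
  subst hj
  simp only [preactv]
  have hpos := Dcoef_pos (u0 := ⟨0, h0⟩) hD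
  have hkv : 0 < Dcoef d A ⟨0, h0⟩ (k + 1) ⟨0, by omega⟩ := hpos (k+1) le_rfl _
  rw [add_div, Finset.sum_div]
  congr 1
  refine Finset.sum_congr rfl fun u _ => ?_
  rw [hidden_rescaled hD k le_rfl x u]
  have hu : Dcoef d A ⟨0, h0⟩ k u ≠ 0 := (hpos k (by omega) u).ne'
  simp only [Matrix.of_apply]
  field_simp
end
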